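/- Let G be a group, H a normal subgroup of G, and R a ring with a G-grading Γ. Consider the induced G/H-grading of R with components R_ḡ = ⊕_{h∈H} R_{gh}, and suppose its support is finite. Then R is nilpotent if and only if the component R_ē = ⊕_{h∈H} R_h is nilpotent. -/

import Mathlib

/-- Product `a * l₀ * l₁ * ⋯` of a nonempty list of ring elements. -/
def mulList {R : Type*} [Mul R] (a : R) (l : List R) : R := l.foldl (· * ·) a

/-- `pw a n` is `aⁿ` for `n ≥ 1` (junk value `0` at `n = 0`). -/
def pw {R : Type*} [Mul R] [Zero R] (a : R) : ℕ → R
  | 0 => 0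
  | 1 => a
  | n + 2 => pw a (n + 1) * a

/-- Product of `n` elements given by `f` (junk `0` when `n = 0`). -/
def finProd {R : Type*} [Mul R] [Zero R] : {n : ℕ} → (Fin n → R) → R
  | 0, _ => 0
  | n + 1, f => mulList (f 0) (List.ofFn fun i : Fin n => f i.succ)

/-- `R ^ n = 0`: every product of `n` elements of `R` vanishes. -/
def PowZero (R : Type*) [Mul R] [Zero R] (n : ℕ) : Prop :=
  ∀ (a : R) (l : List R), l.length + 1 = n → mulList a l = 0

/-- `T ^ n = 0` for a subset `T` of a ring. -/
def PowZeroOn {R : Type*} [Mul R] [Zero R] (T : Set R) (n : ℕ) : Prop :=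
  ∀ (a : R) (l : List R), a ∈ T → (∀ x ∈ l, x ∈ T) → l.length + 1 = n → mulList a l = 0

/-- `a` is nilpotent: `aⁿ = 0` for some `n ≥ 1`. -/
def IsNilE {R : Type*} [Mul R] [Zero R] (a : R) : Prop := ∃ n, 1 ≤ n ∧ pw a n = 0

/-- A nil ring: every element is nilpotent. -/
def IsNilRing (R : Type*) [Mul R] [Zero R] : Prop := ∀ a : R, IsNilE a

/-- An `S`-grading of the ring `R`: a direct sum decomposition into additive
subgroups with `R_g R_h ⊆ R_{gh}`. -/
structure IsGrading {S R : Type*} [Monoid S] [NonUnitalRing R] [DecidableEq S]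
    (A : S → AddSubgroup R) : Prop where
  mul_mem : ∀ {g h : S} {x y : R}, x ∈ A g → y ∈ A h → x * y ∈ A (g * h)
  isInternal : DirectSum.IsInternal A

/-- Grading by an additively written monoid. -/
structure IsAddGrading {S R : Type*} [AddMonoid S] [NonUnitalRing R] [DecidableEq S]
    (A : S → AddSubgroup R) : Prop where
  mul_mem : ∀ {g h : S} {x y : R}, x ∈ A g → y ∈ A h → x * y ∈ A (g + h)
  isInternal : DirectSum.IsInternal A

/-- The subset `T` of a ring is `f`-commutative: there are a semigroup `G` acting on it
from the left and a map `f` with `a*b = f(a,b)·(b*a)`. -/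
def IsFCommutativeOn {R : Type*} [Mul R] (T : Set R) : Prop :=
  ∃ (G : Type) (_ : Semigroup G) (act : G → R → R),
    (∀ l m : G, ∀ x : R, x ∈ T → act (l * m) x = act l (act m x)) ∧
    (∀ l : G, ∀ x : R, x ∈ T → act l x ∈ T) ∧
    (∀ l : G, ∀ x y : R, x ∈ T → y ∈ T → act l (x * y) = act l x * y) ∧
    ∃ f : R → R → G, ∀ a b : R, a ∈ T → b ∈ T → a * b = act (f a b) (b * a)

/-- The ring `R` is `f`-commutative. -/
def IsFCommutative (R : Type*) [Mul R] : Prop :=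
  ∃ (G : Type) (_ : Semigroup G) (act : G → R → R),
    (∀ l m : G, ∀ x : R, act (l * m) x = act l (act m x)) ∧
    (∀ l : G, ∀ x y : R, act l (x * y) = act l x * y) ∧
    ∃ f : R → R → G, ∀ a b : R, a * b = act (f a b) (b * a)

/-- The order of `g`: least `n ≥ 1` with `gⁿ = 1`, and `0` if no such `n` exists. -/
noncomputable def ordOf {S : Type*} [Monoid S] (g : S) : ℕ := sInf {n | 1 ≤ n ∧ g ^ n = 1}

/-!
Only `←` needs an argument. Let `S` be the finite support of the induced `G ⧸ H`-grading and
`R_ē ^ (n + 1) = 0`. Since products are additive in each factor, it suffices to show that a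
product `r₀ r₁ ⋯ r_N` of homogeneous elements with `N = |S| (n + 1)` vanishes. If a partial
product `r₀ ⋯ r_j` has degree outside `S`, it is zero. Otherwise, by pigeonhole, some degree `y`
is the degree of `n + 2` of the partial products; by left cancellation the `n + 1` segments
between consecutive ones have degree `ē`, so the product has a factor in `R_ē ^ (n + 1) = 0`.
-/

section MulList

theorem mulList_cons {M : Type*} [Mul M] (a x : M) (l : List M) :
    mulList a (x :: l) = mulList (a * x) l :=
  rfl

theorem mulList_append {M : Type*} [Mul M] (a : M) (l₁ l₂ : List M) :
    mulList a (l₁ ++ l₂) = mulList (mulList a l₁) l₂ :=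
  List.foldl_append

theorem mulList_concat {M : Type*} [Mul M] (a x : M) (l : List M) :
    mulList a (l ++ [x]) = mulList a l * x := by
  rw [mulList_append]; rfl

theorem map_mulList {M N : Type*} [Mul M] [Mul N] (f : M →ₙ* N) (a : M) (l : List M) :
    f (mulList a l) = mulList (f a) (l.map f) := by
  induction l generalizing a with
  | nil => rfl
  | cons x l ih => exact (ih (a * x)).trans (by rw [map_mul]; rfl)

theorem zero_mulList {M : Type*} [MulZeroClass M] (l : List M) : mulList 0 l = 0 := by
  induction l with
  | nil => rfl
  | cons x l ih => exact (congrArg (mulList · l) (zero_mul x)).trans ih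

theorem mulList_cons_eq_mul {M : Type*} [Semigroup M] (a b : M) (l : List M) :
    mulList a (b :: l) = a * mulList b l :=
  List.foldl_assoc

theorem mulList_append_cons {M : Type*} [Semigroup M] (a b : M) (l₁ l₂ : List M) :
    mulList a (l₁ ++ b :: l₂) = mulList a l₁ * mulList b l₂ := by
  rw [mulList_append, mulList_cons_eq_mul]

end MulList

section Additivity

variable {R : Type*} [NonUnitalNonAssocSemiring R]

def mulListAddHom : List R → R →+ R
  | [] => AddMonoidHom.id R
  | x :: l => (mulListAddHom l).comp (AddMonoidHom.mulRight x)

theorem mulListAddHom_apply (l : List R) (a : R) : mulListAddHom l a = mulList a l := by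
  induction l generalizing a with
  | nil => rfl
  | cons x l ih => exact ih (a * x)

theorem mulList_eq_zero_of_closure_eq_top {U : Set R} (hU : AddSubmonoid.closure U = ⊤) {n : ℕ}
    (h : ∀ a l, a ∈ U → (∀ x ∈ l, x ∈ U) → l.length = n → mulList a l = 0)
    (a : R) (l : List R) (hl : l.length = n) : mulList a l = 0 := by
  have vanish (f : R →+ R) (hf : ∀ x ∈ U, f x = 0) (x : R) : f x = 0 :=
    DFunLike.congr_fun (AddMonoidHom.eq_of_eqOn_denseM hU (f := f) (g := 0) hf) x
  have of_prefix_mem : ∀ (l₂ l₁ : List R) (a : R), a ∈ U → (∀ x ∈ l₁, x ∈ U) →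
      (l₁ ++ l₂).length = n → mulList a (l₁ ++ l₂) = 0 := by
    intro l₂
    induction l₂ with
    | nil => intro l₁ a ha hl₁ hn; exact h a _ ha (by simpa using hl₁) hn
    | cons x l₂ ih =>
      intro l₁ a ha hl₁ hn
      have hslot (z : R) : (mulListAddHom l₂).comp (AddMonoidHom.mulLeft (mulList a l₁)) z =
          mulList a (l₁ ++ z :: l₂) := by
        simp [mulListAddHom_apply, mulList_append, mulList_cons]
      rw [← hslot]
      refine vanish _ (fun z hz => ?_) x
      rw [hslot, List.append_cons]
      exact ih _ a ha (by simpa [or_imp, forall_and] using ⟨hl₁, hz⟩) (by simpa using hn)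
  rw [← mulListAddHom_apply]
  refine vanish _ (fun z hz => ?_) a
  simpa [mulListAddHom_apply] using of_prefix_mem l [] z hz (by simp) hl

end Additivity

theorem List.exists_lt_count_of_mul_lt_length {α : Type*} [DecidableEq α] {s : Finset α}
    {l : List α} (hl : ∀ x ∈ l, x ∈ s) {n : ℕ} (h : s.card * n < l.length) :
    ∃ x ∈ s, n < l.count x := by
  by_contra! hle
  have hsum : ∑ x ∈ s, l.count x = l.length := by
    simpa using Multiset.sum_count_eq_card (s := s) (m := (l : Multiset α)) hl
  have : ∑ x ∈ s, l.count x ≤ s.card * n := by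
    simpa using Finset.sum_le_card_nsmul s _ n hle
  omega

section DegreeCounting

variable {M Q : Type*} [Semigroup M] [Monoid Q] [IsLeftCancelMul Q] (deg : M →ₙ* Q)

theorem exists_prefix_of_lt_count_scanl [DecidableEq Q] (a : M) (l : List M) {y : Q} {k : ℕ}
    (h : k < ((l.scanl (· * ·) a).map deg).count y) :
    ∃ l₁ l₂, l = l₁ ++ l₂ ∧ deg (mulList a l₁) = y ∧
      ∃ u bs, bs.length = k ∧ (∀ b ∈ bs, deg b = 1) ∧ mulList a l₁ = mulList u bs := by
  induction l using List.reverseRecOn generalizing k with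
  | nil =>
    obtain ⟨hy, rfl⟩ : deg a = y ∧ k = 0 := by
      by_cases hy : deg a = y <;> simp_all
    exact ⟨[], [], rfl, hy, a, [], rfl, by simp, rfl⟩
  | append_singleton l x ih =>
    have hcount : ((l.scanl (· * ·) a).map deg).count y
        + (if deg (mulList a (l ++ [x])) = y then 1 else 0) =
        (((l ++ [x]).scanl (· * ·) a).map deg).count y := by
      simp [List.scanl_append, List.count_append, List.count_singleton, mulList]
    by_cases hy : deg (mulList a (l ++ [x])) = y
    · rw [if_pos hy] at hcount
      cases k with
      | zero => exact ⟨l ++ [x], [], by simp, hy, _, [], rfl, by simp, rfl⟩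
      | succ k =>
        obtain ⟨l₁, l₂, rfl, hy₁, u, bs, hbs, hdeg, hu⟩ := ih (k := k) (by omega)
        obtain ⟨b, t, hbt⟩ := List.exists_cons_of_ne_nil (by simp : l₂ ++ [x] ≠ [])
        have hsplit : mulList a (l₁ ++ l₂ ++ [x]) = mulList a l₁ * mulList b t := by
          rw [List.append_assoc, hbt, mulList_append_cons]
        have hw : deg (mulList b t) = 1 := by
          rw [hsplit, map_mul, hy₁] at hy; exact mul_eq_left.mp hy
        refine ⟨l₁ ++ l₂ ++ [x], [], by simp, hy, u, bs ++ [mulList b t], by simp [hbs], ?_,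
          by rw [hsplit, hu, mulList_concat]⟩
        simpa [or_imp, forall_and] using ⟨hdeg, hw⟩
    · rw [if_neg hy, add_zero] at hcount
      obtain ⟨l₁, l₂, rfl, rest⟩ := ih (k := k) (by omega)
      exact ⟨l₁, l₂ ++ [x], by simp, rest⟩

theorem map_mulList_eq_zero_of_card_mul_lt {Z : Type*} [SemigroupWithZero Z] (φ : M →ₙ* Z)
    (S : Finset Q) (hS : ∀ p, deg p ∉ S → φ p = 0) {n : ℕ}
    (hdeg_one : ∀ b bs, deg b = 1 → (∀ x ∈ bs, deg x = 1) → bs.length = n →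
      φ (mulList b bs) = 0)
    (a : M) (l : List M) (hl : S.card * (n + 1) < l.length + 1) : φ (mulList a l) = 0 := by
  classical
  suffices ∃ l₁ l₂, l = l₁ ++ l₂ ∧ φ (mulList a l₁) = 0 by
    obtain ⟨l₁, l₂, rfl, h₁⟩ := this
    rw [mulList_append, map_mulList, h₁, zero_mulList]
  by_cases hds : ∀ y ∈ (l.scanl (· * ·) a).map deg, y ∈ S
  · obtain ⟨y, -, hy⟩ := List.exists_lt_count_of_mul_lt_length hds (by simpa using hl)
    obtain ⟨l₁, l₂, rfl, -, u, bs, hbs, hdeg, hu⟩ :=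
      exists_prefix_of_lt_count_scanl deg a l hy
    obtain ⟨b, bs, rfl⟩ := List.exists_cons_of_length_eq_add_one hbs
    refine ⟨l₁, l₂, rfl, ?_⟩
    rw [hu, mulList_cons_eq_mul, map_mul, hdeg_one b bs (hdeg b (by simp))
      (fun x hx => hdeg x (by simp [hx])) (by simpa using hbs), mul_zero]
  · push Not at hds
    obtain ⟨y, hy, hyS⟩ := hds
    obtain ⟨l₁, l₂, rfl, hy₁, -⟩ :=
      exists_prefix_of_lt_count_scanl deg a l (k := 0) (List.count_pos_iff.mpr hy)
    exact ⟨l₁, l₂, rfl, hS _ (hy₁ ▸ hyS)⟩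

end DegreeCounting

section Grading

variable {G R : Type*} [Monoid G] [DecidableEq G] [NonUnitalRing R] {A : G → AddSubgroup R}

def IsGrading.homogeneousPairs (hA : IsGrading A) : Subsemigroup (G × R) where
  carrier := {p | p.2 ∈ A p.1}
  mul_mem' hp hq := hA.mul_mem hp hq

theorem IsGrading.closure_iUnion_eq_top (hA : IsGrading A) :
    AddSubmonoid.closure (⋃ g, (A g : Set R)) = ⊤ := by
  simp_rw [AddSubmonoid.closure_iUnion, ← AddSubgroup.coe_toAddSubmonoid,
    AddSubmonoid.closure_eq]
  exact DirectSum.IsInternal.addSubmonoid_iSup_eq_top (fun g => (A g).toAddSubmonoid)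
    hA.isInternal

theorem IsGrading.iUnion_eq_range_snd (hA : IsGrading A) :
    ⋃ g, (A g : Set R) =
      Set.range ((MulHom.snd G R).comp (MulMemClass.subtype hA.homogeneousPairs)) := by
  ext x
  simp only [Set.mem_iUnion, SetLike.mem_coe, Set.mem_range]
  exact ⟨fun ⟨g, hx⟩ => ⟨⟨(g, x), hx⟩, rfl⟩, fun ⟨p, hp⟩ => ⟨(p : G × R).1, hp ▸ p.2⟩⟩

theorem IsGrading.powZero_of_powZeroOn_fiber_one {Q : Type*} [Monoid Q] [IsLeftCancelMul Q]
    (hA : IsGrading A) (π : G →* Q)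
    (hfin : {q | (⨆ (g : G) (_ : π g = q), A g) ≠ ⊥}.Finite) {n : ℕ}
    (h : PowZeroOn ((⨆ (g : G) (_ : π g = 1), A g : AddSubgroup R) : Set R) (n + 1)) :
    PowZero R (hfin.toFinset.card * (n + 1) + 1) := by
  let M := hA.homogeneousPairs
  let deg : M →ₙ* Q := π.toMulHom.comp ((MulHom.fst G R).comp (MulMemClass.subtype M))
  let φ : M →ₙ* R := (MulHom.snd G R).comp (MulMemClass.subtype M)
  have hfiber (p : M) : φ p ∈ ⨆ (g : G) (_ : π g = deg p), A g :=
    AddSubgroup.mem_iSup_of_mem (p : G × R).1 (AddSubgroup.mem_iSup_of_mem rfl p.2)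
  have hS (p : M) (hp : deg p ∉ hfin.toFinset) : φ p = 0 := by
    have hbot : (⨆ (g : G) (_ : π g = deg p), A g) = ⊥ :=
      not_not.mp (hfin.mem_toFinset.not.mp hp)
    simpa [hbot] using hfiber p
  have hdeg_one (b : M) (bs : List M) (hb : deg b = 1) (hbs : ∀ x ∈ bs, deg x = 1)
      (hlen : bs.length = n) : φ (mulList b bs) = 0 := by
    rw [map_mulList]
    refine h _ _ (hb ▸ hfiber b) ?_ (by simpa using hlen)
    intro x hx
    obtain ⟨y, hy, rfl⟩ := List.mem_map.mp hx
    exact hbs y hy ▸ hfiber y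
  intro a l hl
  refine mulList_eq_zero_of_closure_eq_top (n := hfin.toFinset.card * (n + 1))
    hA.closure_iUnion_eq_top (fun a l ha hl hlen => ?_) a l (by omega)
  obtain ⟨a, rfl⟩ : a ∈ Set.range φ := hA.iUnion_eq_range_snd ▸ ha
  obtain ⟨l, rfl⟩ : l ∈ Set.range (List.map φ) := by
    rw [Set.range_list_map, ← hA.iUnion_eq_range_snd]; exact hl
  rw [← map_mulList]
  rw [List.length_map] at hlen
  exact map_mulList_eq_zero_of_card_mul_lt deg φ hfin.toFinset hS hdeg_one a l (by omega)

end Grading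

theorem stmt_10 {G R : Type*} [Group G] [DecidableEq G] [NonUnitalRing R]
    (A : G → AddSubgroup R) (hA : IsGrading A)
    (H : Subgroup G) [H.Normal]
    (hfin : {q : G ⧸ H | (⨆ (g : G) (_ : ((g : G ⧸ H)) = q), A g) ≠ ⊥}.Finite) :
    (∃ n, 1 ≤ n ∧ PowZero R n) ↔
      ∃ n, 1 ≤ n ∧ PowZeroOn ((⨆ h ∈ H, A h : AddSubgroup R) : Set R) n := by
  refine ⟨fun ⟨n, hn, h⟩ => ⟨n, hn, fun a l _ _ hlen => h a l hlen⟩, fun ⟨m, hm, h⟩ => ?_⟩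
  obtain ⟨n, rfl⟩ := Nat.exists_eq_add_of_le' hm
  have hker : (⨆ h ∈ H, A h) = ⨆ (g : G) (_ : QuotientGroup.mk' H g = 1), A g := by
    simp only [QuotientGroup.mk'_apply, QuotientGroup.eq_one_iff]
  exact ⟨_, by omega, hA.powZero_of_powZeroOn_fiber_one (QuotientGroup.mk' H) hfin (hker ▸ h)⟩
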